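/- Suppose t := a10^10 − a10^00 = a11^11 − a11^01. Then for every r ≥ 1, tr((Q_N^{(g)})^r) = 2(1 + t^r)^{N-1}, and consequently C_r(Q^{(l)}, P_N) := (1/2^N) tr((Q_N^{(g)})^r) = ((1 + t^r)/2)^{N-1}. -/

import Mathlib

open Matrix Kronecker

/-- Configuration space of `N` sites, each holding a state in `{0,1}`. -/
abbrev Conf (N : ℕ) := Fin N → Fin 2

/-- `Fin 2 × Conf N ≃ Conf (N+1)` by prepending the first bit. -/
def confEquiv (N : ℕ) : Fin 2 × Conf N ≃ Conf (N + 1) :=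
  Fin.consEquiv (fun _ => Fin 2)

/-- `(Fin 2 × Fin 2) × Conf N ≃ Conf (N+2)` by prepending the first two bits. -/
def confEquiv2 (N : ℕ) : (Fin 2 × Fin 2) × Conf N ≃ Conf (N + 2) :=
  (((Equiv.prodAssoc (Fin 2) (Fin 2) (Conf N)).trans
    ((Equiv.refl (Fin 2)).prodCongr (confEquiv N))).trans (confEquiv (N + 1)))

/-- The global operator `Q_N^{(g)}`, defined by `Q_1 = I_2` and
`Q_{N+1} = (I_2 ⊗ Q_N) (Q^{(l)} ⊗ I_{2^{N-1}})`. -/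
def Qg {R : Type*} [CommRing R] (Ql : Matrix (Fin 2 × Fin 2) (Fin 2 × Fin 2) R) :
    (N : ℕ) → Matrix (Conf N) (Conf N) R
  | 0 => 1
  | 1 => 1
  | (N + 2) =>
      (Matrix.reindex (confEquiv (N + 1)) (confEquiv (N + 1))
          ((1 : Matrix (Fin 2) (Fin 2) R) ⊗ₖ Qg Ql (N + 1))) *
      (Matrix.reindex (confEquiv2 N) (confEquiv2 N)
          (Ql ⊗ₖ (1 : Matrix (Conf N) (Conf N) R)))

/-- Top-left block `E`. -/
def blockTL {R : Type*} [CommRing R] {N : ℕ}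
    (M : Matrix (Conf (N + 1)) (Conf (N + 1)) R) : Matrix (Conf N) (Conf N) R :=
  Matrix.of fun x y => M (Fin.cons 0 x) (Fin.cons 0 y)

/-- Top-right block `F`. -/
def blockTR {R : Type*} [CommRing R] {N : ℕ}
    (M : Matrix (Conf (N + 1)) (Conf (N + 1)) R) : Matrix (Conf N) (Conf N) R :=
  Matrix.of fun x y => M (Fin.cons 0 x) (Fin.cons 1 y)

/-- Bottom-left block `G`. -/
def blockBL {R : Type*} [CommRing R] {N : ℕ}
    (M : Matrix (Conf (N + 1)) (Conf (N + 1)) R) : Matrix (Conf N) (Conf N) R :=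
  Matrix.of fun x y => M (Fin.cons 1 x) (Fin.cons 0 y)

/-- Bottom-right block `H`. -/
def blockBR {R : Type*} [CommRing R] {N : ℕ}
    (M : Matrix (Conf (N + 1)) (Conf (N + 1)) R) : Matrix (Conf N) (Conf N) R :=
  Matrix.of fun x y => M (Fin.cons 1 x) (Fin.cons 1 y)


@[simp] lemma confEquiv_apply {N : ℕ} (a : Fin 2) (x : Conf N) :
    confEquiv N (a, x) = Fin.cons a x := rfl
@[simp] lemma confEquiv_symm_apply {N : ℕ} (z : Conf (N+1)) :
    (confEquiv N).symm z = (z 0, Fin.tail z) := rfl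
@[simp] lemma confEquiv2_apply {N : ℕ} (a b : Fin 2) (y : Conf N) :
    confEquiv2 N ((a, b), y) = Fin.cons a (Fin.cons b y) := rfl
@[simp] lemma confEquiv2_symm_apply {N : ℕ} (z : Conf (N+2)) :
    (confEquiv2 N).symm z = ((z 0, Fin.tail z 0), Fin.tail (Fin.tail z)) := rfl

lemma sum_conf {N : ℕ} {M : Type*} [AddCommMonoid M] (f : Conf (N+1) → M) :
    ∑ c, f c = ∑ a : Fin 2, ∑ x : Conf N, f (Fin.cons a x) := by
  rw [← Equiv.sum_comp (confEquiv N), Fintype.sum_prod_type]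
  rfl

lemma Qg_succ_apply {N : ℕ} (Ql : Matrix (Fin 2 × Fin 2) (Fin 2 × Fin 2) ℂ)
    (hvan : ∀ i j k l : Fin 2, j ≠ l → Ql (k, l) (i, j) = 0)
    (z w : Conf (N+2)) :
    Qg Ql (N+2) z w =
      Qg Ql (N+1) (Fin.tail z) (Fin.tail w) * Ql (z 0, Fin.tail w 0) (w 0, Fin.tail w 0) := by
  rw [Qg, Matrix.mul_apply, sum_conf]
  simp only [reindex_apply, submatrix_apply, confEquiv_symm_apply, confEquiv2_symm_apply,
    kroneckerMap_apply, Fin.cons_zero, Fin.tail_cons, Matrix.one_apply]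
  simp only [sum_conf, Fin.tail_cons, Fin.cons_zero, mul_ite, mul_one, mul_zero, ite_mul,
    zero_mul, one_mul, Finset.sum_ite_eq', Finset.mem_univ, if_true]
  rw [Fin.sum_univ_two, Fin.sum_univ_two]
  have fin2 : ∀ i : Fin 2, i = 0 ∨ i = 1 := by decide
  have h01 : ∀ i k : Fin 2, Ql (k, 1) (i, 0) = 0 := fun i k => hvan i 0 k 1 (by decide)
  have h10 : ∀ i k : Fin 2, Ql (k, 0) (i, 1) = 0 := fun i k => hvan i 1 k 0 (by decide)
  have hw : Fin.cons (Fin.tail w 0) (Fin.tail (Fin.tail w)) = Fin.tail w :=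
    Fin.cons_self_tail _
  rcases fin2 (z 0) with hz | hz <;> rcases fin2 (Fin.tail w 0) with hw0 | hw0 <;>
    rw [hw0] at hw <;> simp [hz, hw0, hw, h01, h10] <;>
    exact Or.inr (by first | exact h01 _ _ | exact h10 _ _)

noncomputable section

def Tm : Matrix (Fin 2) (Fin 2) ℂ := !![1, 1; 0, -1]

def Pm (N : ℕ) : Matrix (Conf (N+1)) (Conf (N+1)) ℂ :=
  Matrix.of fun z w => Tm (z 0) (w 0) * (if Fin.tail z = Fin.tail w then 1 else 0)

lemma Tm_mul_Tm : Tm * Tm = 1 := by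
  ext i j
  fin_cases i <;> fin_cases j <;>
    simp [Tm, Matrix.mul_apply, Fin.sum_univ_two, Matrix.one_apply]

lemma cons_eq_iff {N : ℕ} (z w : Conf (N+1)) :
    z = w ↔ z 0 = w 0 ∧ Fin.tail z = Fin.tail w := by
  constructor
  · rintro rfl; exact ⟨rfl, rfl⟩
  · rintro ⟨h1, h2⟩
    rw [← Fin.cons_self_tail z, ← Fin.cons_self_tail w, h1, h2]

lemma Pm_mul_Pm (N : ℕ) : Pm N * Pm N = 1 := by
  ext z w
  rw [Matrix.mul_apply, sum_conf]
  have h2 : (Tm * Tm) (z 0) (w 0) = ∑ a : Fin 2, Tm (z 0) a * Tm a (w 0) :=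
    Matrix.mul_apply
  simp only [Pm, Matrix.of_apply, Fin.cons_zero, Fin.tail_cons, Matrix.one_apply,
    mul_ite, mul_one, mul_zero, ite_mul, zero_mul]
  rw [Fin.sum_univ_two] at h2 ⊢
  simp only [Finset.sum_ite_eq', Finset.mem_univ, if_true]
  by_cases h : Fin.tail z = Fin.tail w
  · simp only [h, if_true, cons_eq_iff z w, h, and_true]
    rw [← h2, Tm_mul_Tm, Matrix.one_apply]
  · simp [h, cons_eq_iff z w]

lemma conjPow {n : Type*} [Fintype n] [DecidableEq n] (P M : Matrix n n ℂ)
    (hP : P * P = 1) (r : ℕ) : (P * M * P) ^ r = P * M ^ r * P := by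
  induction r with
  | zero => simp [hP]
  | succ r ih =>
      rw [pow_succ, ih, pow_succ]
      calc P * M ^ r * P * (P * M * P) = P * M ^ r * (P * P) * M * P := by
            noncomm_ring
        _ = P * (M ^ r * M) * P := by rw [hP]; noncomm_ring

lemma traceConjPow {n : Type*} [Fintype n] [DecidableEq n] (P M : Matrix n n ℂ)
    (hP : P * P = 1) (r : ℕ) : ((P * M * P) ^ r).trace = (M ^ r).trace := by
  rw [conjPow P M hP r, Matrix.trace_mul_cycle, hP, Matrix.one_mul]

def dm (Ql : Matrix (Fin 2 × Fin 2) (Fin 2 × Fin 2) ℂ) (j : Fin 2) :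
    Matrix (Fin 2) (Fin 2) ℂ := Matrix.of fun k i => Ql (k, j) (i, j)

def Am (Ql : Matrix (Fin 2 × Fin 2) (Fin 2 × Fin 2) ℂ) (j : Fin 2) :
    Matrix (Fin 2) (Fin 2) ℂ := Tm * dm Ql j * Tm

lemma Am_eq (Ql : Matrix (Fin 2 × Fin 2) (Fin 2 × Fin 2) ℂ) (j : Fin 2) (k i : Fin 2) :
    Am Ql j k i = ∑ a : Fin 2, ∑ b : Fin 2, Tm k a * Ql (a, j) (b, j) * Tm b i := by
  simp only [Am, Matrix.mul_apply, dm, Matrix.of_apply, Finset.sum_mul]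
  rw [Finset.sum_comm]

lemma Am00 (Ql : Matrix (Fin 2 × Fin 2) (Fin 2 × Fin 2) ℂ)
    (hstoch : ∀ i j : Fin 2, Ql (0, j) (i, j) + Ql (1, j) (i, j) = 1)
    (j : Fin 2) : Am Ql j 0 0 = 1 := by
  rw [Am_eq]
  simp [Tm, Fin.sum_univ_two]
  linear_combination hstoch 0 j

lemma Am01 (Ql : Matrix (Fin 2 × Fin 2) (Fin 2 × Fin 2) ℂ)
    (hstoch : ∀ i j : Fin 2, Ql (0, j) (i, j) + Ql (1, j) (i, j) = 1)
    (j : Fin 2) : Am Ql j 0 1 = 0 := by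
  rw [Am_eq]
  simp [Tm, Fin.sum_univ_two]
  linear_combination hstoch 0 j - hstoch 1 j

lemma Am11 (Ql : Matrix (Fin 2 × Fin 2) (Fin 2 × Fin 2) ℂ) (t : ℂ)
    (ht₁ : t = Ql (1, 0) (1, 0) - Ql (1, 0) (0, 0))
    (ht₂ : t = Ql (1, 1) (1, 1) - Ql (1, 1) (0, 1))
    (j : Fin 2) : Am Ql j 1 1 = t := by
  have fin2 : ∀ i : Fin 2, i = 0 ∨ i = 1 := by decide
  rw [Am_eq]
  rcases fin2 j with h | h <;> subst h <;> simp [Tm, Fin.sum_univ_two] <;>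
    [linear_combination -ht₁; linear_combination -ht₂]

lemma sum_cons_ite {N : ℕ} {M : Type*} [AddCommMonoid M] (c : Conf (N+1))
    (f : Fin 2 → Conf N → M) :
    ∑ a : Fin 2, ∑ x : Conf N, (if Fin.cons a x = c then f a x else 0)
      = f (c 0) (Fin.tail c) := by
  calc ∑ a : Fin 2, ∑ x : Conf N, (if Fin.cons a x = c then f a x else 0)
      = ∑ a : Fin 2, ∑ x : Conf N,
          (fun z => if z = c then f (z 0) (Fin.tail z) else 0) (Fin.cons a x) := by
        simp
    _ = ∑ z, (if z = c then f (z 0) (Fin.tail z) else 0) :=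
        (sum_conf (fun z => if z = c then f (z 0) (Fin.tail z) else 0)).symm
    _ = f (c 0) (Fin.tail c) := by
        rw [Finset.sum_ite_eq' Finset.univ c (fun z => f (z 0) (Fin.tail z))]
        simp

lemma Pm_cons_apply {n : ℕ} (b : Fin 2) (y : Conf n) (c : Conf (n+1)) :
    Pm n (Fin.cons b y) c = Tm b (c 0) * (if y = Fin.tail c then 1 else 0) := by
  simp [Pm]

lemma Mconj_apply {N : ℕ} (Ql : Matrix (Fin 2 × Fin 2) (Fin 2 × Fin 2) ℂ)
    (hvan : ∀ i j k l : Fin 2, j ≠ l → Ql (k, l) (i, j) = 0)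
    (z w : Conf (N+2)) :
    (Pm (N+1) * Qg Ql (N+2) * Pm (N+1)) z w =
      Qg Ql (N+1) (Fin.tail z) (Fin.tail w) * Am Ql (Fin.tail w 0) (z 0) (w 0) := by
  have inner : ∀ b : Fin 2, (Pm (N+1) * Qg Ql (N+2)) z (Fin.cons b (Fin.tail w)) =
      ∑ a : Fin 2, Tm (z 0) a * (Qg Ql (N+1) (Fin.tail z) (Fin.tail w) *
        Ql (a, Fin.tail w 0) (b, Fin.tail w 0)) := by
    intro b
    rw [Matrix.mul_apply, sum_conf]
    refine Finset.sum_congr rfl fun a _ => ?_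
    simp only [Pm, Matrix.of_apply, Fin.cons_zero, Fin.tail_cons,
      Qg_succ_apply Ql hvan, mul_ite, ite_mul, mul_one, mul_zero, zero_mul, one_mul]
    rw [Finset.sum_ite_eq]
    simp [mul_assoc]
  rw [Matrix.mul_apply, sum_conf]
  simp only [Pm_cons_apply, mul_ite, mul_one, mul_zero, Finset.sum_ite_eq',
    Finset.mem_univ, if_true]
  simp only [inner, Am_eq, Finset.mul_sum, Finset.sum_mul]
  rw [Finset.sum_comm]
  refine Finset.sum_congr rfl fun b _ => Finset.sum_congr rfl fun a _ => ?_
  ring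

lemma cons_ne_cons {n : ℕ} (x y : Conf n) : (Fin.cons 0 x : Conf (n+1)) ≠ Fin.cons 1 y := by
  intro hc
  have := congrFun hc 0
  simp at this

lemma block_mul {n : ℕ} (M N' : Matrix (Conf (n+1)) (Conf (n+1)) ℂ) (a b : Fin 2)
    (x y : Conf n) :
    (M * N') (Fin.cons a x) (Fin.cons b y) =
      (∑ z, M (Fin.cons a x) (Fin.cons 0 z) * N' (Fin.cons 0 z) (Fin.cons b y)) +
      (∑ z, M (Fin.cons a x) (Fin.cons 1 z) * N' (Fin.cons 1 z) (Fin.cons b y)) := by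
  rw [Matrix.mul_apply, sum_conf, Fin.sum_univ_two]

lemma one_block {n : ℕ} (a b : Fin 2) (x y : Conf n) :
    (1 : Matrix (Conf (n+1)) (Conf (n+1)) ℂ) (Fin.cons a x) (Fin.cons b y) =
      if a = b then (1 : Matrix (Conf n) (Conf n) ℂ) x y else 0 := by
  rcases eq_or_ne a b with rfl | hab
  · rcases eq_or_ne x y with rfl | hxy
    · simp [Matrix.one_apply]
    · rw [Matrix.one_apply_ne, if_pos rfl, Matrix.one_apply_ne hxy]
      intro hc
      exact hxy (funext fun i => by simpa using congrFun hc i.succ)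
  · rw [if_neg hab, Matrix.one_apply_ne]
    intro hc
    exact hab (by simpa using congrFun hc 0)

lemma tri_pow {n : ℕ} (M : Matrix (Conf (n+1)) (Conf (n+1)) ℂ)
    (h : ∀ x y, M (Fin.cons 0 x) (Fin.cons 1 y) = 0) (r : ℕ) :
    (∀ x y, (M ^ r) (Fin.cons 0 x) (Fin.cons 1 y) = 0) ∧
    (∀ x y, (M ^ r) (Fin.cons 0 x) (Fin.cons 0 y) = (blockTL M ^ r) x y) ∧
    (∀ x y, (M ^ r) (Fin.cons 1 x) (Fin.cons 1 y) = (blockBR M ^ r) x y) := by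
  induction r with
  | zero =>
      refine ⟨fun x y => ?_, fun x y => ?_, fun x y => ?_⟩ <;>
        simp [one_block]
  | succ r ih =>
      obtain ⟨ihTR, ihTL, ihBR⟩ := ih
      refine ⟨fun x y => ?_, fun x y => ?_, fun x y => ?_⟩ <;>
        rw [pow_succ, block_mul]
      · simp [ihTR, h, zero_mul, mul_zero]
      · rw [pow_succ, Matrix.mul_apply]
        simp only [ihTR, ihTL, zero_mul, mul_zero, Finset.sum_const_zero, add_zero]
        exact Finset.sum_congr rfl fun z _ => by rw [blockTL, Matrix.of_apply]
      · rw [pow_succ, Matrix.mul_apply]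
        simp only [ihBR, h, zero_mul, mul_zero, Finset.sum_const_zero, zero_add]
        exact Finset.sum_congr rfl fun z _ => by rw [blockBR, Matrix.of_apply]

lemma trace_block {n : ℕ} (M : Matrix (Conf (n+1)) (Conf (n+1)) ℂ) :
    M.trace = (blockTL M).trace + (blockBR M).trace := by
  simp only [Matrix.trace, Matrix.diag]
  rw [sum_conf (fun z => M z z), Fin.sum_univ_two]
  rfl

lemma tri_trace_pow {n : ℕ} (M : Matrix (Conf (n+1)) (Conf (n+1)) ℂ)
    (h : ∀ x y, M (Fin.cons 0 x) (Fin.cons 1 y) = 0) (r : ℕ) :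
    (M ^ r).trace = (blockTL M ^ r).trace + (blockBR M ^ r).trace := by
  obtain ⟨-, hTL, hBR⟩ := tri_pow M h r
  rw [trace_block]
  congr 1 <;> simp only [Matrix.trace, Matrix.diag] <;>
    exact Finset.sum_congr rfl fun x _ => by
      first
        | rw [blockTL, Matrix.of_apply, hTL]
        | rw [blockBR, Matrix.of_apply, hBR]

lemma trace_Qg_pow (Ql : Matrix (Fin 2 × Fin 2) (Fin 2 × Fin 2) ℂ)
    (hvan : ∀ i j k l : Fin 2, j ≠ l → Ql (k, l) (i, j) = 0)
    (hstoch : ∀ i j : Fin 2, Ql (0, j) (i, j) + Ql (1, j) (i, j) = 1) (t : ℂ)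
    (ht₁ : t = Ql (1, 0) (1, 0) - Ql (1, 0) (0, 0))
    (ht₂ : t = Ql (1, 1) (1, 1) - Ql (1, 1) (0, 1)) (r : ℕ) (N : ℕ) :
    Matrix.trace ((Qg Ql (N + 1)) ^ r) = 2 * (1 + t ^ r) ^ N := by
  induction N with
  | zero =>
      rw [show Qg Ql 1 = (1 : Matrix (Conf 1) (Conf 1) ℂ) from rfl, one_pow,
        Matrix.trace_one]
      simp
  | succ N ih =>
      set M' := Pm (N+1) * Qg Ql (N+2) * Pm (N+1) with hM'
      have htr : ((Qg Ql (N+2)) ^ r).trace = (M' ^ r).trace :=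
        (traceConjPow _ _ (Pm_mul_Pm _) r).symm
      have hTR : ∀ x y, M' (Fin.cons 0 x) (Fin.cons 1 y) = 0 := by
        intro x y
        rw [hM', Mconj_apply Ql hvan]
        simp [Am01 Ql hstoch]
      have hTL : blockTL M' = Qg Ql (N+1) := by
        ext x y
        rw [blockTL, Matrix.of_apply, hM', Mconj_apply Ql hvan]
        simp [Am00 Ql hstoch]
      have hBR : blockBR M' = t • Qg Ql (N+1) := by
        ext x y
        rw [blockBR, Matrix.of_apply, hM', Mconj_apply Ql hvan]
        simp [Am11 Ql t ht₁ ht₂]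
        ring
      rw [htr, tri_trace_pow M' hTR r, hTL, hBR, smul_pow, Matrix.trace_smul, ih,
        smul_eq_mul]
      ring

/-- if `t = a₁₀¹⁰ − a₁₀⁰⁰ = a₁₁¹¹ − a₁₁⁰¹`, then for every `r ≥ 1`,
`tr((Q_N^{(g)})^r) = 2(1+t^r)^{N-1}` and `C_r = (1/2^N) tr((Q_N^{(g)})^r) = ((1+t^r)/2)^{N-1}`. -/
theorem stmt9 (Ql : Matrix (Fin 2 × Fin 2) (Fin 2 × Fin 2) ℂ) (hvan : ∀ i j k l : Fin 2, j ≠ l → Ql (k, l) (i, j) = 0) (hstoch : ∀ i j : Fin 2, Ql (0, j) (i, j) + Ql (1, j) (i, j) = 1) (t : ℂ)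
    (ht₁ : t = Ql (1, 0) (1, 0) - Ql (1, 0) (0, 0))
    (ht₂ : t = Ql (1, 1) (1, 1) - Ql (1, 1) (0, 1)) (r : ℕ) (hr : 1 ≤ r) (N : ℕ) :
    Matrix.trace ((Qg Ql (N + 1)) ^ r) = 2 * (1 + t ^ r) ^ N ∧
    (1 / 2 ^ (N + 1) : ℂ) * Matrix.trace ((Qg Ql (N + 1)) ^ r) = ((1 + t ^ r) / 2) ^ N := by
  have h1 := trace_Qg_pow Ql hvan hstoch t ht₁ ht₂ r N
  refine ⟨h1, ?_⟩
  rw [h1, div_pow]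
  rw [pow_succ]
  field_simp
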